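/- arXiv:0805.3420 — 2 statements merged into one kernel-verified Lean document; each statement's English description precedes it below -/
import Mathlib

section
/- If L/K is an APF-extension and F is any intermediate field K ⊆ F ⊆ L, then F/K is an APF-extension. -/
/-- `L/K` is an APF-extension: with `G = G_K` the absolute Galois group of `K`,
`R v = G_K^v` its upper ramification filtration and `HL = G_L` the subgroup fixing `L`,
the condition is `(G_K : G_K^v G_L) < ∞` for all real `v ≥ -1` (the upper ramification
subgroups are normal, so `G_K^v G_L = R v ⊔ HL`). -/
def IsAPF {G : Type*} [Group G] (R : ℝ → Subgroup G) (HL : Subgroup G) : Prop :=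
  ∀ v : ℝ, -1 ≤ v → (R v ⊔ HL).index ≠ 0

/-- If `L/K` is an APF-extension and `F` is any intermediate field
`K ⊆ F ⊆ L` (so that `G_L ≤ G_F ≤ G_K`), then `F/K` is an APF-extension. -/
theorem apf_of_intermediate {G : Type*} [Group G]
    (R : ℝ → Subgroup G) (HF HL : Subgroup G) (hle : HL ≤ HF)
    (hAPF : IsAPF R HL) :
    IsAPF R HF :=
  fun v hv ↦ ne_zero_of_dvd_ne_zero (hAPF v hv)
    (Subgroup.index_dvd_of_le (sup_le_sup_left hle (R v)))
end

section
/- Fesenko's map φ_{L/K}^{(φ)} : Gal(L/K) → U^◇_{X̃(L/K)}/U_{X(L/K)} satisfies the cocycle identity φ_{L/K}^{(φ)}(στ) = φ_{L/K}^{(φ)}(σ) · φ_{L/K}^{(φ)}(τ)^σ for all σ, τ ∈ Gal(L/K). -/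
/-!
Applying `U ↦ U^{1-φ}` to both sides of the cocycle identity reduces it, by uniqueness of
solutions modulo `U_{X(L/K)}`, to the identity `Π^{στ-1} = (Π^{τ-1})^σ · Π^{σ-1}` for the
coboundary `σ ↦ Π^{σ-1}`, because `U ↦ U^{1-φ}` is a homomorphism commuting with the Galois action.
-/

section

variable {G A : Type*} [Group G] [CommGroup A] [MulDistribMulAction G A]

theorem isMulCocycle₁_smul_mul_inv (a : A) :
    groupCohomology.IsMulCocycle₁ fun σ : G => σ • a * a⁻¹ := fun σ τ => by
  dsimp only
  rw [mul_smul, smul_mul', smul_inv', mul_assoc, inv_mul_cancel_left]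

/-- The map `U ↦ U^{1-φ}`. -/
def oneSubFrob (frob : A →* A) : A →* A := MonoidHom.id A / frob

theorem oneSubFrob_apply (frob : A →* A) (a : A) : oneSubFrob frob a = a * (frob a)⁻¹ :=
  div_eq_mul_inv a (frob a)

theorem oneSubFrob_smul {frob : A →* A} (hfrob : ∀ (σ : G) (a : A), frob (σ • a) = σ • frob a)
    (σ : G) (a : A) : oneSubFrob frob (σ • a) = σ • oneSubFrob frob a := by
  rw [oneSubFrob_apply, oneSubFrob_apply, hfrob, smul_mul', smul_inv']

end

/-- Fesenko's cocycle identity, with `A = X̃(L/K)^×`, `frob = φ`, `Prim = Π_{φ;L/K}`,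
`N = U_{X(L/K)}` and `U σ = U_σ`. -/
theorem fesenko_cocycle {G A : Type*} [Group G] [CommGroup A] [MulDistribMulAction G A]
    (frob : A →* A) (hfrob : ∀ (σ : G) (a : A), frob (σ • a) = σ • frob a)
    (Prim : A) (N : Subgroup A)
    (U : G → A)
    (hU : ∀ σ : G, U σ * (frob (U σ))⁻¹ = σ • Prim * Prim⁻¹)
    (huniq : ∀ a b : A, a * (frob a)⁻¹ = b * (frob b)⁻¹ → a⁻¹ * b ∈ N) :
    ∀ σ τ : G, (U (σ * τ))⁻¹ * (U σ * σ • U τ) ∈ N := by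
  intro σ τ
  apply huniq
  calc U (σ * τ) * (frob (U (σ * τ)))⁻¹
      = σ • (τ • Prim * Prim⁻¹) * (σ • Prim * Prim⁻¹) := by
        rw [hU]; exact isMulCocycle₁_smul_mul_inv Prim σ τ
    _ = σ • oneSubFrob frob (U τ) * oneSubFrob frob (U σ) := by
        rw [oneSubFrob_apply, oneSubFrob_apply, hU, hU]
    _ = oneSubFrob frob (U σ * σ • U τ) := by
        rw [map_mul, oneSubFrob_smul hfrob, mul_comm]
    _ = U σ * σ • U τ * (frob (U σ * σ • U τ))⁻¹ := oneSubFrob_apply frob _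
end
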